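/- Let n ≥ 1, let a₀ : U → ℝ be a smooth solution of the single Jordan block equation of size n on an open set U ⊆ ℝⁿ, and let k ∈ {1,…,n}. Then ∂_k a₀ solves the single Jordan block equation of size n−k+1 in the variables u¹,…,u^{n−k+1} (the remaining coordinates acting as parameters): for all i, j ∈ {1,…,n−k+1}, Σ_{s=i+1}^{n−k+1} u^{s−i+1} ∂_s ∂_j (∂_k a₀) − Σ_{s=j+1}^{n−k+1} u^{s−j+1} ∂_s ∂_i (∂_k a₀) = 0 on U. -/

import Mathlib

/-- Partial derivative `∂_i f` with 1-based index `i ∈ {1,…,n}` (zero outside that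
range). -/
noncomputable def pdN {n : ℕ} (i : ℕ) (f : (Fin n → ℝ) → ℝ) : (Fin n → ℝ) → ℝ :=
  if h : 1 ≤ i ∧ i ≤ n then
    fun x => fderiv ℝ f x (Pi.single (⟨i - 1, by omega⟩ : Fin n) 1)
  else 0

/-- The coordinate function `u^i` with 1-based index `i ∈ {1,…,n}` (zero outside
that range). -/
def coordN {n : ℕ} (i : ℕ) : (Fin n → ℝ) → ℝ :=
  if h : 1 ≤ i ∧ i ≤ n then fun x => x ⟨i - 1, by omega⟩ else 0

/-- `a₀` solves the single Jordan block equation of size `n` on `U`: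
for all `i, j ∈ {1,…,n}`,
`Σ_{s=i+1}^{n} u^{s−i+1} ∂_s ∂_j a₀ − Σ_{s=j+1}^{n} u^{s−j+1} ∂_s ∂_i a₀ = 0` on `U`. -/
def SolvesJordan (n : ℕ) (U : Set (Fin n → ℝ)) (a₀ : (Fin n → ℝ) → ℝ) : Prop :=
  ∀ i j : ℕ, 1 ≤ i → i ≤ n → 1 ≤ j → j ≤ n → ∀ x ∈ U,
    (∑ s ∈ Finset.Icc (i + 1) n, coordN (s - i + 1) x * pdN s (pdN j a₀) x)
      - (∑ s ∈ Finset.Icc (j + 1) n, coordN (s - j + 1) x * pdN s (pdN i a₀) x) = 0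

section basic
variable {n : ℕ}

lemma pdN_apply {i : ℕ} (h1 : 1 ≤ i) (h2 : i ≤ n) (f : (Fin n → ℝ) → ℝ) (x : Fin n → ℝ) :
    pdN i f x = fderiv ℝ f x (Pi.single (⟨i - 1, by omega⟩ : Fin n) 1) := by
  unfold pdN
  rw [dif_pos ⟨h1, h2⟩]

lemma pdN_of_gt {i : ℕ} (h : ¬ (1 ≤ i ∧ i ≤ n)) (f : (Fin n → ℝ) → ℝ) :
    pdN i f = 0 := by
  unfold pdN; rw [dif_neg h]

lemma pdN_congr {i : ℕ} {f g : (Fin n → ℝ) → ℝ} {x : Fin n → ℝ}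
    (h : f =ᶠ[nhds x] g) : pdN i f x = pdN i g x := by
  unfold pdN
  split_ifs with hi
  · show (fderiv ℝ f x) _ = (fderiv ℝ g x) _
    rw [h.fderiv_eq]
  · rfl

lemma pdN_zero_fun {i : ℕ} (x : Fin n → ℝ) : pdN i (fun _ => (0:ℝ)) x = 0 := by
  unfold pdN
  split_ifs with hi
  · rw [fderiv_fun_const]; simp
  · rfl

lemma pdN_contDiffOn {U : Set (Fin n → ℝ)} (hU : IsOpen U) {f : (Fin n → ℝ) → ℝ}
    (hf : ContDiffOn ℝ (⊤:ℕ∞) f U) (i : ℕ) : ContDiffOn ℝ (⊤:ℕ∞) (pdN i f) U := by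
  unfold pdN
  split_ifs with hi
  · exact (hf.fderiv_of_isOpen hU (by exact_mod_cast le_top)).clm_apply contDiffOn_const
  · exact contDiffOn_const

lemma pdN_differentiableAt {U : Set (Fin n → ℝ)} (hU : IsOpen U) {f : (Fin n → ℝ) → ℝ}
    (hf : ContDiffOn ℝ (⊤:ℕ∞) f U) {x : Fin n → ℝ} (hx : x ∈ U) :
    DifferentiableAt ℝ f x := by
  exact (hf.differentiableOn (by simp)).differentiableAt (hU.mem_nhds hx)

lemma coordN_continuous (c : ℕ) : Continuous (coordN (n := n) c) := by
  unfold coordN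
  split_ifs with hc
  · exact continuous_apply _
  · exact continuous_const

lemma coordN_differentiableAt (c : ℕ) (x : Fin n → ℝ) :
    DifferentiableAt ℝ (coordN (n := n) c) x := by
  unfold coordN
  split_ifs with hc
  · exact (ContinuousLinearMap.proj (R := ℝ) (φ := fun _ : Fin n => ℝ) ⟨c-1, by omega⟩).differentiableAt
  · exact differentiableAt_const 0

lemma fderiv_coordN {k : ℕ} (hk1 : 1 ≤ k) (hkn : k ≤ n) (c : ℕ) (x : Fin n → ℝ) :
    fderiv ℝ (coordN (n := n) c) x (Pi.single (⟨k - 1, by omega⟩ : Fin n) 1)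
      = if (1 ≤ c ∧ c ≤ n ∧ c = k) then 1 else 0 := by
  unfold coordN
  split_ifs with hc h1 h2
  · obtain ⟨hc1, hc2⟩ := hc
    have : (fun x : Fin n → ℝ => x (⟨c - 1, by omega⟩ : Fin n))
        = ⇑(ContinuousLinearMap.proj (R := ℝ) (φ := fun _ : Fin n => ℝ) ⟨c-1, by omega⟩) := rfl
    rw [this, ContinuousLinearMap.fderiv]
    simp only [ContinuousLinearMap.proj_apply]
    rw [Pi.single_apply]
    rw [if_pos]
    obtain ⟨_, _, rfl⟩ := h1
    rfl
  · obtain ⟨hc1, hc2⟩ := hc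
    have : (fun x : Fin n → ℝ => x (⟨c - 1, by omega⟩ : Fin n))
        = ⇑(ContinuousLinearMap.proj (R := ℝ) (φ := fun _ : Fin n => ℝ) ⟨c-1, by omega⟩) := rfl
    rw [this, ContinuousLinearMap.fderiv]
    simp only [ContinuousLinearMap.proj_apply]
    rw [Pi.single_apply, if_neg]
    intro h
    apply h1
    refine ⟨hc1, hc2, ?_⟩
    have := Fin.mk.injEq (c-1) (by omega : c - 1 < n) (k-1) (by omega)
    rw [Fin.ext_iff] at h
    simp at h
    omega
  · exfalso; exact hc ⟨h2.1, h2.2.1⟩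
  · show (fderiv ℝ (fun _ => (0:ℝ)) x) _ = 0
    rw [fderiv_fun_const]; simp

lemma pdN_comm {U : Set (Fin n → ℝ)} (hU : IsOpen U) {f : (Fin n → ℝ) → ℝ}
    (hf : ContDiffOn ℝ (⊤:ℕ∞) f U) {p q : ℕ} (hp1 : 1 ≤ p) (hpn : p ≤ n)
    (hq1 : 1 ≤ q) (hqn : q ≤ n) {x : Fin n → ℝ} (hx : x ∈ U) :
    pdN p (pdN q f) x = pdN q (pdN p f) x := by
  set f' := fderiv ℝ f with hf'def
  have hf' : ContDiffOn ℝ (⊤:ℕ∞) f' U :=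
    hf.fderiv_of_isOpen hU (by exact_mod_cast le_top)
  have hd : DifferentiableAt ℝ f' x :=
    (hf'.differentiableOn (by simp)).differentiableAt (hU.mem_nhds hx)
  set f'' := fderiv ℝ f' x with hf''def
  have hev : ∀ᶠ y in nhds x, HasFDerivAt f (f' y) y := by
    filter_upwards [hU.mem_nhds hx] with y hy
    exact (pdN_differentiableAt hU hf hy).hasFDerivAt
  have hsymm : ∀ v w, f'' v w = f'' w v :=
    second_derivative_symmetric_of_eventually hev hd.hasFDerivAt
  have key : ∀ r c : ℕ, (hr1 : 1 ≤ r) → (hrn : r ≤ n) → (hc1 : 1 ≤ c) → (hcn : c ≤ n) →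
      pdN r (pdN c f) x
        = f'' (Pi.single (⟨r - 1, by omega⟩ : Fin n) 1) (Pi.single (⟨c - 1, by omega⟩ : Fin n) 1) := by
    intro r c hr1 hrn hc1 hcn
    have hfun : pdN c f = fun y => (ContinuousLinearMap.apply ℝ ℝ
        (Pi.single (⟨c - 1, by omega⟩ : Fin n) 1)) (f' y) := by
      funext y
      rw [pdN_apply hc1 hcn]
      rfl
    have hder : HasFDerivAt (pdN c f)
        ((ContinuousLinearMap.apply ℝ ℝ (Pi.single (⟨c - 1, by omega⟩ : Fin n) 1)).comp f'') x := by
      rw [hfun]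
      exact ((ContinuousLinearMap.apply ℝ ℝ _).hasFDerivAt).comp x hd.hasFDerivAt
    rw [pdN_apply hr1 hrn, hder.fderiv]
    rfl
  rw [key p q hp1 hpn hq1 hqn, key q p hq1 hqn hp1 hpn, hsymm]

lemma pdN_zero {i : ℕ} (x : Fin n → ℝ) : pdN i (0 : (Fin n → ℝ) → ℝ) x = 0 :=
  pdN_zero_fun x

end basic

section main
variable {n : ℕ} {U : Set (Fin n → ℝ)} {a₀ : (Fin n → ℝ) → ℝ}

lemma Icc_insert {p m : ℕ} (h : p ≤ m) : Finset.Icc p m = insert p (Finset.Icc (p+1) m) := by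
  ext t; simp only [Finset.mem_Icc, Finset.mem_insert]; omega

lemma lemA (hU : IsOpen U) (ha : ContDiffOn ℝ (⊤:ℕ∞) a₀ U) (hsol : SolvesJordan n U a₀) :
    ∀ dq dp q p, q + dq = n → p + dp = n → 1 ≤ q → 1 ≤ p → n + 2 ≤ p + q →
    ∀ x ∈ U, coordN 2 x ≠ 0 → pdN p (pdN q a₀) x = 0 := by
  intro dq
  induction dq using Nat.strong_induction_on with
  | _ dq IHq =>
  intro dp
  induction dp using Nat.strong_induction_on with
  | _ dp IHp =>
  intro q p hq hp h1q h1p hsum x hx hx2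
  have hqn : q ≤ n := by omega
  have hpn : p ≤ n := by omega
  have hp2 : 2 ≤ p := by omega
  have heq := hsol (p-1) q (by omega) (by omega) h1q hqn x hx
  have h2 : ∀ s ∈ Finset.Icc (q+1) n, coordN (s - q + 1) x * pdN s (pdN (p-1) a₀) x = 0 := by
    intro s hs
    simp only [Finset.mem_Icc] at hs
    have hcm : pdN s (pdN (p-1) a₀) x = pdN (p-1) (pdN s a₀) x :=
      pdN_comm hU ha (by omega) (by omega) (by omega) (by omega) hx
    rw [hcm, IHq (n - s) (by omega) (n - (p-1)) s (p-1) (by omega) (by omega) (by omega)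
      (by omega) (by omega) x hx hx2, mul_zero]
  rw [Finset.sum_eq_zero h2, sub_zero, show p - 1 + 1 = p by omega,
    Icc_insert hpn, Finset.sum_insert (by simp)] at heq
  have h3 : ∀ s ∈ Finset.Icc (p+1) n, coordN (s - (p-1) + 1) x * pdN s (pdN q a₀) x = 0 := by
    intro s hs
    simp only [Finset.mem_Icc] at hs
    rw [IHp (n - s) (by omega) q s hq (by omega) h1q (by omega) (by omega) x hx hx2, mul_zero]
  rw [Finset.sum_eq_zero h3, add_zero, show p - (p-1) + 1 = 2 by omega] at heq
  rcases mul_eq_zero.mp heq with h | h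
  · exact absurd h hx2
  · exact h

lemma zero2 (hU : IsOpen U) (ha : ContDiffOn ℝ (⊤:ℕ∞) a₀ U) (hsol : SolvesJordan n U a₀)
    (p q : ℕ) (h1p : 1 ≤ p) (h1q : 1 ≤ q) (hsum : n + 2 ≤ p + q)
    {x : Fin n → ℝ} (hx : x ∈ U) (hx2 : coordN 2 x ≠ 0) : pdN p (pdN q a₀) x = 0 := by
  by_cases hpn : p ≤ n
  · by_cases hqn : q ≤ n
    · exact lemA hU ha hsol (n - q) (n - p) q p (by omega) (by omega) h1q h1p hsum x hx hx2
    · rw [pdN_of_gt (i := q) (by omega), pdN_zero]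
  · rw [pdN_of_gt (i := p) (by omega)]
    rfl

lemma lemB (hU : IsOpen U) (ha : ContDiffOn ℝ (⊤:ℕ∞) a₀ U) (hsol : SolvesJordan n U a₀) :
    ∀ dc, ∀ p q p' q' : ℕ, 1 ≤ p → 1 ≤ q → 1 ≤ p' → 1 ≤ q' → p + q = p' + q' →
    p + q + dc = n + 2 → ∀ x ∈ U, coordN 2 x ≠ 0 →
    pdN p (pdN q a₀) x = pdN p' (pdN q' a₀) x := by
  intro dc
  induction dc using Nat.strong_induction_on with
  | _ dc IH =>
  intro p q p' q' h1p h1q h1p' h1q' hsum hc x hx hx2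
  rcases Nat.eq_zero_or_pos dc with hdc | hdc
  · subst hdc
    rw [zero2 hU ha hsol p q h1p h1q (by omega) hx hx2,
      zero2 hU ha hsol p' q' h1p' h1q' (by omega) hx hx2]
  have step : ∀ p q : ℕ, 1 ≤ p → 2 ≤ q → p + q + dc = n + 2 →
      pdN p (pdN q a₀) x = pdN (p+1) (pdN (q-1) a₀) x := by
    intro p q h1p h2q hc
    have hpn : p + 1 ≤ n := by omega
    have hqn : q ≤ n := by omega
    have heq := hsol p (q-1) h1p (by omega) (by omega) (by omega) x hx
    rw [show q - 1 + 1 = q by omega] at heq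
    rw [Icc_insert hpn, Finset.sum_insert (by simp), Icc_insert hqn,
      Finset.sum_insert (by simp), show p + 1 - p + 1 = 2 by omega,
      show q - (q-1) + 1 = 2 by omega] at heq
    have tails : (∑ s ∈ Finset.Icc (p+1+1) n, coordN (s - p + 1) x * pdN s (pdN (q-1) a₀) x)
        = ∑ s ∈ Finset.Icc (q+1) n, coordN (s - (q-1) + 1) x * pdN s (pdN p a₀) x := by
      have e1 : (∑ s ∈ Finset.Icc (p+2) n, coordN (s - p + 1) x * pdN s (pdN (q-1) a₀) x)
          = ∑ t ∈ Finset.Icc (p+q+1) (n+(q-1)),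
              coordN (t - (p+q) + 2) x * pdN (t-(q-1)) (pdN (q-1) a₀) x := by
        have hm := Finset.sum_map (Finset.Icc (p+2) n) (addRightEmbedding (q-1))
          (fun t => coordN (t - (p+q) + 2) x * pdN (t-(q-1)) (pdN (q-1) a₀) x)
        rw [Finset.map_add_right_Icc] at hm
        rw [show p+q+1 = p+2+(q-1) by omega, hm]
        apply Finset.sum_congr rfl
        intro s hs
        simp only [Finset.mem_Icc] at hs
        simp only [addRightEmbedding_apply]
        rw [show s + (q-1) - (q-1) = s by omega, show s + (q-1) - (p+q) + 2 = s - p + 1 by omega]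
      have e2 : (∑ t ∈ Finset.Icc (p+q+1) (n+(q-1)),
              coordN (t - (p+q) + 2) x * pdN (t-(q-1)) (pdN (q-1) a₀) x)
          = ∑ t ∈ Finset.Icc (p+q+1) (2*n),
              coordN (t - (p+q) + 2) x * pdN (t-(q-1)) (pdN (q-1) a₀) x := by
        apply Finset.sum_subset (Finset.Icc_subset_Icc_right (by omega))
        intro t ht ht'
        simp only [Finset.mem_Icc] at ht ht'
        rw [pdN_of_gt (i := t - (q-1)) (by omega)]
        simp
      have e1' : (∑ s ∈ Finset.Icc (q+1) n, coordN (s - (q-1) + 1) x * pdN s (pdN p a₀) x)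
          = ∑ t ∈ Finset.Icc (p+q+1) (n+p),
              coordN (t - (p+q) + 2) x * pdN (t-p) (pdN p a₀) x := by
        have hm := Finset.sum_map (Finset.Icc (q+1) n) (addRightEmbedding p)
          (fun t => coordN (t - (p+q) + 2) x * pdN (t-p) (pdN p a₀) x)
        rw [Finset.map_add_right_Icc] at hm
        rw [show p+q+1 = q+1+p by omega, hm]
        apply Finset.sum_congr rfl
        intro s hs
        simp only [Finset.mem_Icc] at hs
        simp only [addRightEmbedding_apply]
        rw [show s + p - p = s by omega, show s + p - (p+q) + 2 = s - (q-1) + 1 by omega]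
      have e2' : (∑ t ∈ Finset.Icc (p+q+1) (n+p),
              coordN (t - (p+q) + 2) x * pdN (t-p) (pdN p a₀) x)
          = ∑ t ∈ Finset.Icc (p+q+1) (2*n),
              coordN (t - (p+q) + 2) x * pdN (t-p) (pdN p a₀) x := by
        apply Finset.sum_subset (Finset.Icc_subset_Icc_right (by omega))
        intro t ht ht'
        simp only [Finset.mem_Icc] at ht ht'
        rw [pdN_of_gt (i := t - p) (by omega)]
        simp
      have e3 : (∑ t ∈ Finset.Icc (p+q+1) (2*n),
              coordN (t - (p+q) + 2) x * pdN (t-(q-1)) (pdN (q-1) a₀) x)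
          = ∑ t ∈ Finset.Icc (p+q+1) (2*n),
              coordN (t - (p+q) + 2) x * pdN (t-p) (pdN p a₀) x := by
        apply Finset.sum_congr rfl
        intro t ht
        simp only [Finset.mem_Icc] at ht
        by_cases htn : t ≤ n + 1
        · rw [IH (n+2-t) (by omega) (t-(q-1)) (q-1) (t-p) p (by omega) (by omega) (by omega)
            h1p (by omega) (by omega) x hx hx2]
        · rw [zero2 hU ha hsol (t-(q-1)) (q-1) (by omega) (by omega) (by omega) hx hx2,
            zero2 hU ha hsol (t-p) p (by omega) h1p (by omega) hx hx2]
      rw [show p+1+1 = p+2 by omega, e1, e2, e3, ← e2', ← e1']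
    rw [tails] at heq
    have hAB : coordN 2 x * (pdN (p+1) (pdN (q-1) a₀) x - pdN q (pdN p a₀) x) = 0 := by
      ring_nf
      ring_nf at heq
      linarith
    rcases mul_eq_zero.mp hAB with h | h
    · exact absurd h hx2
    · have hqp : pdN q (pdN p a₀) x = pdN p (pdN q a₀) x :=
        pdN_comm hU ha (by omega) hqn h1p (by omega) hx
      rw [← hqp]
      linarith [sub_eq_zero.mp h]
  have chain : ∀ d p q : ℕ, 1 ≤ p → d + 1 ≤ q → p + q + dc = n + 2 →
      pdN p (pdN q a₀) x = pdN (p+d) (pdN (q-d) a₀) x := by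
    intro d
    induction d with
    | zero => intro p q _ _ _; simp
    | succ d IHd =>
      intro p q h1p hdq hc
      rw [step p q h1p (by omega) hc, IHd (p+1) (q-1) (by omega) (by omega) (by omega),
        show p+1+d = p+(d+1) by omega, show q-1-d = q-(d+1) by omega]
  rcases le_total p p' with hle | hle
  · have hch := chain (p' - p) p q h1p (by omega) hc
    rw [hch, show p + (p'-p) = p' by omega, show q - (p'-p) = q' by omega]
  · have hch := chain (p - p') p' q' h1p' (by omega) (by omega)
    rw [hch, show p' + (p-p') = p by omega, show q' - (p-p') = q by omega]

lemma sym3 (hU : IsOpen U) (ha : ContDiffOn ℝ (⊤:ℕ∞) a₀ U) {k s j : ℕ}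
    (h1k : 1 ≤ k) (hkn : k ≤ n) (h1s : 1 ≤ s) (hsn : s ≤ n) (h1j : 1 ≤ j) (hjn : j ≤ n)
    {x : Fin n → ℝ} (hx : x ∈ U) :
    pdN k (pdN s (pdN j a₀)) x = pdN s (pdN j (pdN k a₀)) x := by
  have h1 : pdN k (pdN s (pdN j a₀)) x = pdN s (pdN k (pdN j a₀)) x :=
    pdN_comm hU (pdN_contDiffOn hU ha j) h1k hkn h1s hsn hx
  rw [h1]
  apply pdN_congr
  filter_upwards [hU.mem_nhds hx] with y hy
  exact pdN_comm hU ha h1k hkn h1j hjn hy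

lemma zero3 (hU : IsOpen U) (ha : ContDiffOn ℝ (⊤:ℕ∞) a₀ U) (hsol : SolvesJordan n U a₀)
    {s j k : ℕ} (h1s : 1 ≤ s) (hsn : s ≤ n) (h1j : 1 ≤ j) (hjn : j ≤ n)
    (h1k : 1 ≤ k) (hsum : n + 2 ≤ s + k)
    {x : Fin n → ℝ} (hx : x ∈ U) (hx2 : coordN 2 x ≠ 0) :
    pdN s (pdN j (pdN k a₀)) x = 0 := by
  rw [pdN_comm hU (pdN_contDiffOn hU ha k) h1s hsn h1j hjn hx]
  have hΩ : IsOpen (U ∩ {y : Fin n → ℝ | coordN 2 y ≠ 0}) :=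
    hU.inter (isOpen_ne.preimage (coordN_continuous 2))
  have hev : pdN s (pdN k a₀) =ᶠ[nhds x] (fun _ => (0:ℝ)) := by
    filter_upwards [hΩ.mem_nhds ⟨hx, hx2⟩] with y hy
    exact zero2 hU ha hsol s k h1s h1k hsum hy.1 hy.2
  rw [pdN_congr hev, pdN_zero_fun]

lemma lemB' (hU : IsOpen U) (ha : ContDiffOn ℝ (⊤:ℕ∞) a₀ U) (hsol : SolvesJordan n U a₀)
    (p q p' q' : ℕ) (h1p : 1 ≤ p) (h1q : 1 ≤ q) (h1p' : 1 ≤ p') (h1q' : 1 ≤ q')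
    (hsum : p + q = p' + q') {x : Fin n → ℝ} (hx : x ∈ U) (hx2 : coordN 2 x ≠ 0) :
    pdN p (pdN q a₀) x = pdN p' (pdN q' a₀) x := by
  rcases le_or_gt (n + 2) (p + q) with h | h
  · rw [zero2 hU ha hsol p q h1p h1q h hx hx2,
      zero2 hU ha hsol p' q' h1p' h1q' (by omega) hx hx2]
  · exact lemB hU ha hsol (n + 2 - (p+q)) p q p' q' h1p h1q h1p' h1q' hsum (by omega) x hx hx2

lemma diffEq (hU : IsOpen U) (ha : ContDiffOn ℝ (⊤:ℕ∞) a₀ U) (hsol : SolvesJordan n U a₀)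
    {i j k : ℕ} (h1i : 1 ≤ i) (hin : i ≤ n) (h1j : 1 ≤ j) (hjn : j ≤ n)
    (h1k : 1 ≤ k) (hkn : k ≤ n) {x : Fin n → ℝ} (hx : x ∈ U) :
    (∑ s ∈ Finset.Icc (i+1) n, ((if s - i + 1 = k then 1 else 0) * pdN s (pdN j a₀) x
        + coordN (s-i+1) x * pdN k (pdN s (pdN j a₀)) x))
      - (∑ s ∈ Finset.Icc (j+1) n, ((if s - j + 1 = k then 1 else 0) * pdN s (pdN i a₀) x
        + coordN (s-j+1) x * pdN k (pdN s (pdN i a₀)) x)) = 0 := by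
  set v : Fin n → ℝ := Pi.single (⟨k - 1, by omega⟩ : Fin n) 1 with hv
  have hterm : ∀ (a b : ℕ), ∀ s ∈ Finset.Icc (a+1) n,
      HasFDerivAt (fun y => coordN (s-a+1) y * pdN s (pdN b a₀) y)
        ((coordN (s-a+1) x) • fderiv ℝ (pdN s (pdN b a₀)) x
          + (pdN s (pdN b a₀) x) • fderiv ℝ (coordN (s-a+1) : (Fin n → ℝ) → ℝ) x) x :=
    fun a b s _ => ((coordN_differentiableAt _ x).hasFDerivAt).mul
      ((pdN_differentiableAt hU (pdN_contDiffOn hU (pdN_contDiffOn hU ha b) s) hx).hasFDerivAt)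
  have hΦ : HasFDerivAt (fun y =>
      (∑ s ∈ Finset.Icc (i+1) n, coordN (s-i+1) y * pdN s (pdN j a₀) y)
        - (∑ s ∈ Finset.Icc (j+1) n, coordN (s-j+1) y * pdN s (pdN i a₀) y))
      ((∑ s ∈ Finset.Icc (i+1) n, ((coordN (s-i+1) x) • fderiv ℝ (pdN s (pdN j a₀)) x
          + (pdN s (pdN j a₀) x) • fderiv ℝ (coordN (s-i+1) : (Fin n → ℝ) → ℝ) x))
        - (∑ s ∈ Finset.Icc (j+1) n, ((coordN (s-j+1) x) • fderiv ℝ (pdN s (pdN i a₀)) x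
          + (pdN s (pdN i a₀) x) • fderiv ℝ (coordN (s-j+1) : (Fin n → ℝ) → ℝ) x))) x :=
    (HasFDerivAt.fun_sum (hterm i j)).sub (HasFDerivAt.fun_sum (hterm j i))
  have hzero : fderiv ℝ (fun y =>
      (∑ s ∈ Finset.Icc (i+1) n, coordN (s-i+1) y * pdN s (pdN j a₀) y)
        - (∑ s ∈ Finset.Icc (j+1) n, coordN (s-j+1) y * pdN s (pdN i a₀) y)) x = 0 := by
    have hev : (fun y =>
        (∑ s ∈ Finset.Icc (i+1) n, coordN (s-i+1) y * pdN s (pdN j a₀) y)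
          - (∑ s ∈ Finset.Icc (j+1) n, coordN (s-j+1) y * pdN s (pdN i a₀) y))
        =ᶠ[nhds x] (fun _ => (0:ℝ)) := by
      filter_upwards [hU.mem_nhds hx] with y hy
      exact hsol i j h1i hin h1j hjn y hy
    rw [hev.fderiv_eq, fderiv_fun_const]
    rfl
  have hD := hΦ.fderiv
  rw [hzero] at hD
  have hDv := congrArg (fun L : (Fin n → ℝ) →L[ℝ] ℝ => L v) hD.symm
  simp only [ContinuousLinearMap.sub_apply, ContinuousLinearMap.add_apply,
    ContinuousLinearMap.smul_apply, ContinuousLinearMap.coe_sum', Finset.sum_apply,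
    ContinuousLinearMap.zero_apply, smul_eq_mul] at hDv
  have hout : ∀ a b : ℕ,
      (∑ s ∈ Finset.Icc (a+1) n, ((if s - a + 1 = k then 1 else 0) * pdN s (pdN b a₀) x
        + coordN (s-a+1) x * pdN k (pdN s (pdN b a₀)) x))
      = ∑ s ∈ Finset.Icc (a+1) n,
          (coordN (s-a+1) x * (fderiv ℝ (pdN s (pdN b a₀)) x v)
            + pdN s (pdN b a₀) x * (fderiv ℝ (coordN (s-a+1) : (Fin n → ℝ) → ℝ) x v)) := by
    intro a b
    apply Finset.sum_congr rfl
    intro s hs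
    rw [hv, fderiv_coordN h1k hkn, ← pdN_apply h1k hkn]
    by_cases hc : s - a + 1 = k
    · rw [if_pos hc, if_pos ⟨by omega, by omega, hc⟩]
      ring
    · rw [if_neg hc, if_neg (by tauto)]
      ring
  rw [hout i j, hout j i]
  rw [← hDv]

lemma mainOmega (hU : IsOpen U) (ha : ContDiffOn ℝ (⊤:ℕ∞) a₀ U) (hsol : SolvesJordan n U a₀)
    {k : ℕ} (h1k : 1 ≤ k) (hkn : k ≤ n) {i j : ℕ}
    (h1i : 1 ≤ i) (him : i ≤ n - k + 1) (h1j : 1 ≤ j) (hjm : j ≤ n - k + 1)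
    {x : Fin n → ℝ} (hx : x ∈ U) (hx2 : coordN 2 x ≠ 0) :
    (∑ s ∈ Finset.Icc (i + 1) (n - k + 1),
        coordN (s - i + 1) x * pdN s (pdN j (pdN k a₀)) x)
      - (∑ s ∈ Finset.Icc (j + 1) (n - k + 1),
          coordN (s - j + 1) x * pdN s (pdN i (pdN k a₀)) x) = 0 := by
  have hin : i ≤ n := by omega
  have hjn : j ≤ n := by omega
  have hD := diffEq hU ha hsol h1i hin h1j hjn h1k hkn hx
  rw [Finset.sum_add_distrib, Finset.sum_add_distrib] at hD
  have hδ : ∀ a b : ℕ,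
      (∑ s ∈ Finset.Icc (a+1) n, (if s - a + 1 = k then 1 else 0) * pdN s (pdN b a₀) x)
      = if a + k - 1 ∈ Finset.Icc (a+1) n then pdN (a+k-1) (pdN b a₀) x else 0 := by
    intro a b
    rw [← Finset.sum_ite_eq' (Finset.Icc (a+1) n) (a+k-1) (fun s => pdN s (pdN b a₀) x)]
    apply Finset.sum_congr rfl
    intro s hs
    simp only [Finset.mem_Icc] at hs
    by_cases hc : s = a + k - 1
    · rw [if_pos (by omega), if_pos hc, hc, one_mul]
    · rw [if_neg (by omega), if_neg hc, zero_mul]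
  rw [hδ i j, hδ j i] at hD
  have hδeq : (if i + k - 1 ∈ Finset.Icc (i+1) n then pdN (i+k-1) (pdN j a₀) x else 0)
      = (if j + k - 1 ∈ Finset.Icc (j+1) n then pdN (j+k-1) (pdN i a₀) x else 0) := by
    by_cases hk2 : 2 ≤ k
    · rw [if_pos (by simp only [Finset.mem_Icc]; omega),
        if_pos (by simp only [Finset.mem_Icc]; omega)]
      exact lemB' hU ha hsol (i+k-1) j (j+k-1) i (by omega) h1j (by omega) h1i (by omega)
        hx hx2
    · rw [if_neg (by simp only [Finset.mem_Icc]; omega),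
        if_neg (by simp only [Finset.mem_Icc]; omega)]
  have htail : ∀ a b : ℕ, 1 ≤ a → a ≤ n - k + 1 → 1 ≤ b → b ≤ n - k + 1 →
      (∑ s ∈ Finset.Icc (a+1) n, coordN (s-a+1) x * pdN k (pdN s (pdN b a₀)) x)
        = ∑ s ∈ Finset.Icc (a+1) (n - k + 1), coordN (s-a+1) x * pdN s (pdN b (pdN k a₀)) x := by
    intro a b h1a ham h1b hbm
    have hsplit : (∑ s ∈ Finset.Icc (a+1) (n-k+1), coordN (s-a+1) x * pdN k (pdN s (pdN b a₀)) x)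
        + (∑ s ∈ Finset.Icc ((n-k+1)+1) n, coordN (s-a+1) x * pdN k (pdN s (pdN b a₀)) x)
        = ∑ s ∈ Finset.Icc (a+1) n, coordN (s-a+1) x * pdN k (pdN s (pdN b a₀)) x := by
      rw [Finset.Icc_add_one_left_eq_Ioc, Finset.Icc_add_one_left_eq_Ioc, Finset.Icc_add_one_left_eq_Ioc]
      exact Finset.sum_Ioc_consecutive _ (by omega) (by omega)
    rw [← hsplit]
    have h0 : ∀ s ∈ Finset.Icc ((n-k+1)+1) n,
        coordN (s-a+1) x * pdN k (pdN s (pdN b a₀)) x = 0 := by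
      intro s hs
      simp only [Finset.mem_Icc] at hs
      rw [sym3 hU ha h1k hkn (by omega) (by omega) h1b (by omega) hx,
        zero3 hU ha hsol (by omega) (by omega) h1b (by omega) h1k (by omega) hx hx2, mul_zero]
    rw [Finset.sum_eq_zero h0, add_zero]
    apply Finset.sum_congr rfl
    intro s hs
    simp only [Finset.mem_Icc] at hs
    rw [sym3 hU ha h1k hkn (by omega) (by omega) h1b (by omega) hx]
  rw [htail i j h1i him h1j hjm, htail j i h1j hjm h1i him, hδeq] at hD
  linarith [hD]

lemma coordN_two (h2n : 2 ≤ n) (y : Fin n → ℝ) : coordN 2 y = y ⟨1, by omega⟩ := by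
  unfold coordN
  rw [dif_pos ⟨by omega, h2n⟩]

lemma dense_coordN_two (h2n : 2 ≤ n) : Dense {y : Fin n → ℝ | coordN 2 y ≠ 0} := by
  rw [Metric.dense_iff]
  intro z r hr
  by_cases hz : coordN 2 z ≠ 0
  · exact ⟨z, Metric.mem_ball_self hr, hz⟩
  · push_neg at hz
    refine ⟨Function.update z ⟨1, by omega⟩ (r/2), ?_, ?_⟩
    · rw [Metric.mem_ball, dist_pi_lt_iff hr]
      intro b
      rcases eq_or_ne b ⟨1, by omega⟩ with hb | hb
      · subst hb
        rw [Function.update_self]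
        rw [coordN_two h2n] at hz
        rw [hz, Real.dist_eq, sub_zero, abs_of_pos (by linarith)]
        linarith
      · rw [Function.update_of_ne hb, dist_self]
        exact hr
    · show coordN 2 _ ≠ 0
      rw [coordN_two h2n, Function.update_self]
      positivity

end main

/-- If `a₀` solves the single Jordan block equation of size `n`, then `∂_k a₀`
solves the single Jordan block equation of size `n − k + 1` in the variables
`u¹,…,u^{n−k+1}`. -/
theorem stmt14 {n : ℕ} (hn : 1 ≤ n) (U : Set (Fin n → ℝ)) (hU : IsOpen U)
    (a₀ : (Fin n → ℝ) → ℝ) (ha : ContDiffOn ℝ (⊤ : ℕ∞) a₀ U)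
    (hsol : SolvesJordan n U a₀)
    (k : ℕ) (hk1 : 1 ≤ k) (hkn : k ≤ n) :
    ∀ i j : ℕ, 1 ≤ i → i ≤ n - k + 1 → 1 ≤ j → j ≤ n - k + 1 → ∀ x ∈ U,
      (∑ s ∈ Finset.Icc (i + 1) (n - k + 1),
          coordN (s - i + 1) x * pdN s (pdN j (pdN k a₀)) x)
        - (∑ s ∈ Finset.Icc (j + 1) (n - k + 1),
            coordN (s - j + 1) x * pdN s (pdN i (pdN k a₀)) x) = 0 := by
  intro i j h1i him h1j hjm x hx
  by_cases h2n : 2 ≤ n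
  · -- main case
    set D : Set (Fin n → ℝ) := {y | coordN 2 y ≠ 0} with hD
    set F : (Fin n → ℝ) → ℝ := fun y =>
      (∑ s ∈ Finset.Icc (i + 1) (n - k + 1),
          coordN (s - i + 1) y * pdN s (pdN j (pdN k a₀)) y)
        - (∑ s ∈ Finset.Icc (j + 1) (n - k + 1),
            coordN (s - j + 1) y * pdN s (pdN i (pdN k a₀)) y) with hF
    have hcont : ContinuousOn F U := by
      apply ContinuousOn.sub <;>
      · apply continuousOn_finset_sum
        intro s _
        exact ((coordN_continuous _).continuousOn).mul
          ((pdN_contDiffOn hU (pdN_contDiffOn hU (pdN_contDiffOn hU ha k) _) s).continuousOn)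
    have key : ∀ y ∈ U ∩ D, F y = 0 := fun y hy =>
      mainOmega hU ha hsol hk1 hkn h1i him h1j hjm hy.1 hy.2
    have hxcl : x ∈ closure (U ∩ D) :=
      (dense_coordN_two h2n).open_subset_closure_inter hU hx
    have hnb : (nhdsWithin x (U ∩ D)).NeBot := mem_closure_iff_nhdsWithin_neBot.mp hxcl
    have h1 : Filter.Tendsto F (nhdsWithin x (U ∩ D)) (nhds (F x)) :=
      (hcont x hx).mono Set.inter_subset_left
    have h2 : Filter.Tendsto F (nhdsWithin x (U ∩ D)) (nhds 0) := by
      apply Filter.Tendsto.congr' ?_ tendsto_const_nhds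
      filter_upwards [self_mem_nhdsWithin] with y hy
      exact (key y hy).symm
    exact tendsto_nhds_unique h1 h2
  · -- n = 1
    have hn1 : n = 1 := by omega
    have : n - k + 1 = 1 := by omega
    rw [this, Finset.Icc_eq_empty (by omega), Finset.Icc_eq_empty (by omega)]
    simp
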